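/- Let X ≥ 2 and let s = σ + it with θ < σ = Re s < 1 and t = Im s ≥ 2. Then |ζ(s) − ζ_X(s)| ≤ (1/(σ−θ))·( κ·X^(1−σ)/t + 2A·t/X^(σ−θ) ) ≤ ((2A+κ)/(σ−θ))·( X^(1−σ)/t + t/X^(σ−θ) ). -/

import Mathlib

/-! Write `N(x) = R(x) + κ(x - 1)`. Partial summation turns `ζ_X(s)` into
`N(X) X^{-s} + s ∫_1^X N(x) x^{-s-1} dx`; the linear part `κ(x - 1)` integrates in closed form
and leaves `κ X^{1-s}/(s-1)`, so that
`ζ(s) - ζ_X(s) = κ X^{1-s}/(s-1) - R(X) X^{-s} + s ∫_X^∞ R(x) x^{-s-1} dx`.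
Axiom A bounds the last two terms by `A X^{θ-σ}` and `|s| A X^{θ-σ}/(σ-θ)`, and `|s - 1| ≥ t`
bounds the first by `κ X^{1-σ}/t`. -/

open scoped BigOperators Real

/-- The multiplicative norm on the Beurling generalized integers `ℕ →₀ ℕ`
generated by the primes `q i`. -/
noncomputable def bNorm (q : ℕ → ℝ) (g : ℕ →₀ ℕ) : ℝ :=
  g.prod fun i k => q i ^ k

/-- The integer counting function `N(x)`. -/
noncomputable def bN (q : ℕ → ℝ) (x : ℝ) : ℕ :=
  {g : ℕ →₀ ℕ | bNorm q g ≤ x}.ncard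

/-- The remainder `R(x) = N(x) - κ(x-1)`. -/
noncomputable def bR (q : ℕ → ℝ) (κ : ℝ) (x : ℝ) : ℝ :=
  (bN q x : ℝ) - κ * (x - 1)

/-- The Beurling zeta function, via the analytic continuation formula
`ζ(s) = κ/(s-1) + s ∫_1^∞ R(x) x^(-s-1) dx`. -/
noncomputable def bZeta (q : ℕ → ℝ) (κ : ℝ) (s : ℂ) : ℂ :=
  (κ : ℂ) / (s - 1) + s * ∫ x in Set.Ioi (1 : ℝ), (bR q κ x : ℂ) * (x : ℂ) ^ (-s - 1)

/-- The partial sums `ζ_X(s) = ∑_{‖g‖ ≤ X} ‖g‖^{-s}`. -/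
noncomputable def bZetaX (q : ℕ → ℝ) (X : ℝ) (s : ℂ) : ℂ :=
  ∑ᶠ g ∈ {g : ℕ →₀ ℕ | bNorm q g ≤ X}, (bNorm q g : ℂ) ^ (-s)

open MeasureTheory Set
open scoped Finset

section Tail

variable {R : ℝ → ℝ} {A θ : ℝ} {s : ℂ}

lemma norm_ofReal_mul_cpow_le (hR : ∀ x, 1 ≤ x → |R x| ≤ A * x ^ θ) {x : ℝ} (hx : 1 ≤ x) :
    ‖(R x : ℂ) * (x : ℂ) ^ (-s - 1)‖ ≤ A * x ^ (θ - s.re - 1) := by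
  have hx0 : 0 < x := zero_lt_one.trans_le hx
  rw [norm_mul, Complex.norm_real, Real.norm_eq_abs, Complex.norm_cpow_eq_rpow_re_of_pos hx0]
  calc |R x| * x ^ (-s - 1).re ≤ A * x ^ θ * x ^ (-s - 1).re := by gcongr; exact hR x hx
    _ = A * x ^ (θ - s.re - 1) := by
      rw [mul_assoc, ← Real.rpow_add hx0]
      congr 2
      simp only [Complex.sub_re, Complex.neg_re, Complex.one_re]
      ring

lemma integrableOn_Ioi_ofReal_mul_cpow (hRm : Measurable R)
    (hR : ∀ x, 1 ≤ x → |R x| ≤ A * x ^ θ) {a : ℝ} (ha : 1 ≤ a) (hs : θ < s.re) :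
    IntegrableOn (fun x : ℝ => (R x : ℂ) * (x : ℂ) ^ (-s - 1)) (Ioi a) := by
  have ha0 : 0 < a := zero_lt_one.trans_le ha
  have hcpow : ContinuousOn (fun x : ℝ => (x : ℂ) ^ (-s - 1)) (Ioi a) := fun x hx =>
    (Complex.continuousAt_ofReal_cpow_const x _ (Or.inr (ha0.trans hx).ne')).continuousWithinAt
  refine Integrable.mono'
    ((integrableOn_Ioi_rpow_of_lt (a := θ - s.re - 1) (by linarith) ha0).const_mul A)
    ((Complex.measurable_ofReal.comp hRm).aestronglyMeasurable.mul
      (hcpow.aestronglyMeasurable measurableSet_Ioi)) ?_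
  filter_upwards [ae_restrict_mem measurableSet_Ioi] with x hx
  exact norm_ofReal_mul_cpow_le hR (ha.trans hx.le)

lemma norm_integral_Ioi_ofReal_mul_cpow_le (hR : ∀ x, 1 ≤ x → |R x| ≤ A * x ^ θ) {a : ℝ}
    (ha : 1 ≤ a) (hs : θ < s.re) :
    ‖∫ x in Ioi a, (R x : ℂ) * (x : ℂ) ^ (-s - 1)‖ ≤ A * a ^ (θ - s.re) / (s.re - θ) := by
  have ha0 : 0 < a := zero_lt_one.trans_le ha
  have hexp : θ - s.re - 1 < -1 := by linarith
  calc ‖∫ x in Ioi a, (R x : ℂ) * (x : ℂ) ^ (-s - 1)‖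
      ≤ ∫ x in Ioi a, A * x ^ (θ - s.re - 1) := by
        refine norm_integral_le_of_norm_le
          ((integrableOn_Ioi_rpow_of_lt hexp ha0).const_mul A) ?_
        filter_upwards [ae_restrict_mem measurableSet_Ioi] with x hx
        exact norm_ofReal_mul_cpow_le hR (ha.trans hx.le)
    _ = A * a ^ (θ - s.re) / (s.re - θ) := by
      rw [integral_const_mul, integral_Ioi_rpow_of_lt hexp ha0, sub_add_cancel]
      field_simp [(sub_pos.2 hs).ne', (sub_neg.2 hs).ne]
      ring

end Tail

lemma cpow_neg_eq_add_integral_cpow {a X : ℝ} {s : ℂ} (ha : 0 < a) (haX : a ≤ X) (hs : s ≠ 0) :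
    (a : ℂ) ^ (-s) = (X : ℂ) ^ (-s) + s * ∫ x in a..X, (x : ℂ) ^ (-s - 1) := by
  rw [integral_cpow (Or.inr ⟨by contrapose! hs; linear_combination -hs,
    notMem_uIcc_of_lt ha (ha.trans_le haX)⟩), sub_add_cancel]
  field_simp
  ring

lemma integral_sub_one_mul_cpow {X : ℝ} (hX : 1 ≤ X) {s : ℂ} (hs0 : s ≠ 0) (hs1 : s ≠ 1) :
    s * ∫ x in (1 : ℝ)..X, ((x : ℂ) - 1) * (x : ℂ) ^ (-s - 1) =
      1 / (s - 1) - ((X : ℂ) - 1) * (X : ℂ) ^ (-s) - (X : ℂ) ^ (1 - s) / (s - 1) := by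
  have h0 : (0 : ℝ) ∉ uIcc 1 X := notMem_uIcc_of_lt one_pos (one_pos.trans_le hX)
  have hsplit : EqOn (fun x : ℝ => ((x : ℂ) - 1) * (x : ℂ) ^ (-s - 1))
      (fun x : ℝ => (x : ℂ) ^ (-s) - (x : ℂ) ^ (-s - 1)) (uIcc 1 X) := fun x hx => by
    have hx : (x : ℂ) ≠ 0 := Complex.ofReal_ne_zero.2 (ne_of_mem_of_not_mem hx h0)
    have e : (x : ℂ) ^ (-s) = x ^ (1 : ℂ) * x ^ (-s - 1) := by
      rw [← Complex.cpow_add _ _ hx]; ring_nf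
    simp only [e, Complex.cpow_one]
    ring
  have hX : (X : ℂ) ^ (1 - s) = X * (X : ℂ) ^ (-s) := by
    rw [show 1 - s = 1 + -s by ring,
      Complex.cpow_add _ _ (by exact_mod_cast (one_pos.trans_le hX).ne'), Complex.cpow_one]
  rw [intervalIntegral.integral_congr hsplit, intervalIntegral.integral_sub
    (intervalIntegral.intervalIntegrable_cpow (Or.inr h0))
    (intervalIntegral.intervalIntegrable_cpow (Or.inr h0)),
    integral_cpow (Or.inr ⟨by contrapose! hs1; linear_combination -hs1, h0⟩),
    integral_cpow (Or.inr ⟨by contrapose! hs0; linear_combination -hs0, h0⟩),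
    sub_add_cancel, neg_add_eq_sub, hX, Complex.ofReal_one, Complex.one_cpow, Complex.one_cpow]
  have : s - 1 ≠ 0 := sub_ne_zero.2 hs1
  have : 1 - s ≠ 0 := sub_ne_zero.2 hs1.symm
  field_simp
  ring

lemma setIntegral_Ioc_indicator_Ici {f : ℝ → ℂ} {a b c : ℝ} (hba : b ≤ a) (hac : a ≤ c) :
    ∫ x in Ioc b c, (Ici a).indicator f x = ∫ x in a..c, f x := by
  calc ∫ x in Ioc b c, (Ici a).indicator f x = ∫ x in Ioc b c, (Ioi a).indicator f x :=
        integral_congr_ae (ae_restrict_of_ae (indicator_ae_eq_of_ae_eq_set Ioi_ae_eq_Ici.symm))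
    _ = ∫ x in a..c, f x := by
      rw [integral_indicator measurableSet_Ioi, Measure.restrict_restrict measurableSet_Ioi,
        inter_comm, Ioc_inter_Ioi, sup_eq_right.2 hba, intervalIntegral.integral_of_le hac]

section Beurling

variable {q : ℕ → ℝ}

lemma one_le_bNorm (hq : ∀ i, 1 < q i) (g : ℕ →₀ ℕ) : 1 ≤ bNorm q g :=
  Finset.one_le_prod fun i _ => one_le_pow₀ (hq i).le

lemma bN_mono (hfin : ∀ x : ℝ, {g : ℕ →₀ ℕ | bNorm q g ≤ x}.Finite) : Monotone (bN q) :=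
  fun _ y hxy => Set.ncard_le_ncard (fun _ hg => le_trans hg hxy) (hfin y)

lemma measurable_bR (hfin : ∀ x : ℝ, {g : ℕ →₀ ℕ | bNorm q g ≤ x}.Finite) (κ : ℝ) :
    Measurable (bR q κ) :=
  (measurable_from_nat.comp (bN_mono hfin).measurable).sub (by fun_prop)

lemma bN_eq_card_filter (hfin : ∀ x : ℝ, {g : ℕ →₀ ℕ | bNorm q g ≤ x}.Finite) {x X : ℝ}
    (hxX : x ≤ X) : bN q x = #{g ∈ (hfin X).toFinset | bNorm q g ≤ x} := by
  rw [bN, ← Set.ncard_coe_finset]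
  congr 1
  ext g
  simp only [Finset.coe_filter, Set.Finite.mem_toFinset]
  exact ⟨fun h => ⟨h.trans hxX, h⟩, And.right⟩

lemma bZetaX_eq_add_integral (hq : ∀ i, 1 < q i)
    (hfin : ∀ x : ℝ, {g : ℕ →₀ ℕ | bNorm q g ≤ x}.Finite) {X : ℝ} (hX : 1 ≤ X) {s : ℂ}
    (hs : s ≠ 0) :
    bZetaX q X s = bN q X * (X : ℂ) ^ (-s)
      + s * ∫ x in Ioc 1 X, (bN q x : ℂ) * (x : ℂ) ^ (-s - 1) := by
  set S := (hfin X).toFinset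
  set f : ℝ → ℂ := fun x => (x : ℂ) ^ (-s - 1)
  have hS : ∀ g ∈ S, 1 ≤ bNorm q g ∧ bNorm q g ≤ X := fun g hg =>
    ⟨one_le_bNorm hq g, (hfin X).mem_toFinset.1 hg⟩
  have hf : IntegrableOn f (Ioc 1 X) :=
    (intervalIntegral.intervalIntegrable_cpow (Or.inr
      (notMem_uIcc_of_lt one_pos (one_pos.trans_le hX)))).1
  have hcount : ∀ x ∈ Ioc 1 X, ∑ g ∈ S, (Ici (bNorm q g)).indicator f x = bN q x * f x := by
    intro x hx
    rw [Finset.sum_indicator_eq_sum_filter, Finset.sum_const, nsmul_eq_mul,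
      bN_eq_card_filter hfin hx.2]
    rfl
  calc bZetaX q X s = ∑ g ∈ S, (bNorm q g : ℂ) ^ (-s) := finsum_mem_eq_finite_toFinset_sum _ _
    _ = ∑ g ∈ S, ((X : ℂ) ^ (-s) + s * ∫ x in Ioc 1 X, (Ici (bNorm q g)).indicator f x) := by
      refine Finset.sum_congr rfl fun g hg => ?_
      rw [setIntegral_Ioc_indicator_Ici (hS g hg).1 (hS g hg).2]
      exact cpow_neg_eq_add_integral_cpow (one_pos.trans_le (hS g hg).1) (hS g hg).2 hs
    _ = #S * (X : ℂ) ^ (-s) + s * ∫ x in Ioc 1 X, ∑ g ∈ S, (Ici (bNorm q g)).indicator f x := by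
      rw [Finset.sum_add_distrib, Finset.sum_const, nsmul_eq_mul, ← Finset.mul_sum,
        integral_finsetSum _ fun g _ => hf.indicator measurableSet_Ici]
    _ = _ := by
      rw [setIntegral_congr_fun measurableSet_Ioc hcount, bN,
        Set.ncard_eq_toFinset_card _ (hfin X)]

variable {κ A θ X : ℝ} {s : ℂ}

lemma bZeta_sub_bZetaX_eq (hq : ∀ i, 1 < q i)
    (hfin : ∀ x : ℝ, {g : ℕ →₀ ℕ | bNorm q g ≤ x}.Finite)
    (hAxiomA : ∀ x : ℝ, 1 ≤ x → |bR q κ x| ≤ A * x ^ θ) (hX : 1 ≤ X) (hs : θ < s.re)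
    (hs0 : s ≠ 0) (hs1 : s ≠ 1) :
    bZeta q κ s - bZetaX q X s = κ * (X : ℂ) ^ (1 - s) / (s - 1) - bR q κ X * (X : ℂ) ^ (-s)
      + s * ∫ x in Ioi X, (bR q κ x : ℂ) * (x : ℂ) ^ (-s - 1) := by
  have hRint := integrableOn_Ioi_ofReal_mul_cpow (measurable_bR hfin κ) hAxiomA le_rfl hs
  have hlin : IntervalIntegrable (fun x : ℝ => ((x : ℂ) - 1) * (x : ℂ) ^ (-s - 1)) volume 1 X :=
    ContinuousOn.intervalIntegrable fun x hx =>
      ((Complex.continuous_ofReal.sub continuous_const).continuousAt.mul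
        (Complex.continuousAt_ofReal_cpow_const x _
          (Or.inr (ne_of_mem_of_not_mem hx
            (notMem_uIcc_of_lt one_pos (one_pos.trans_le hX)))))).continuousWithinAt
  have hN : ∀ x : ℝ, (bN q x : ℂ) = bR q κ x + κ * ((x : ℂ) - 1) := fun x => by
    rw [bR]; push_cast; ring
  have hsplit : ∫ x in Ioi 1, (bR q κ x : ℂ) * (x : ℂ) ^ (-s - 1)
      = (∫ x in Ioc 1 X, (bR q κ x : ℂ) * (x : ℂ) ^ (-s - 1))
        + ∫ x in Ioi X, (bR q κ x : ℂ) * (x : ℂ) ^ (-s - 1) := by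
    rw [← Ioc_union_Ioi_eq_Ioi hX]
    exact setIntegral_union (Ioc_disjoint_Ioi le_rfl) measurableSet_Ioi
      (hRint.mono_set fun y hy => hy.1) (hRint.mono_set (Ioi_subset_Ioi hX))
  have hIoc : ∫ x in Ioc 1 X, (bN q x : ℂ) * (x : ℂ) ^ (-s - 1)
      = (∫ x in Ioc 1 X, (bR q κ x : ℂ) * (x : ℂ) ^ (-s - 1))
        + κ * ∫ x in (1 : ℝ)..X, ((x : ℂ) - 1) * (x : ℂ) ^ (-s - 1) := by
    simp only [hN, add_mul, mul_assoc]
    rw [integral_add (hRint.mono_set fun y hy => hy.1)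
      ((hlin.1).const_mul _), integral_const_mul, intervalIntegral.integral_of_le hX]
  have hlin_eval := integral_sub_one_mul_cpow hX hs0 hs1
  rw [bZeta, bZetaX_eq_add_integral hq hfin hX hs0, hsplit, hIoc, hN]
  linear_combination (-(κ : ℂ)) * hlin_eval

lemma norm_bZeta_sub_bZetaX_le (hq : ∀ i, 1 < q i)
    (hfin : ∀ x : ℝ, {g : ℕ →₀ ℕ | bNorm q g ≤ x}.Finite) (hκ : 0 ≤ κ)
    (hAxiomA : ∀ x : ℝ, 1 ≤ x → |bR q κ x| ≤ A * x ^ θ) (hX : 1 ≤ X) (hs : θ < s.re)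
    (ht : 0 < s.im) :
    ‖bZeta q κ s - bZetaX q X s‖ ≤ κ * X ^ (1 - s.re) / s.im + A * X ^ (θ - s.re)
      + ‖s‖ * (A * X ^ (θ - s.re) / (s.re - θ)) := by
  have hX0 : 0 < X := one_pos.trans_le hX
  have hs0 : s ≠ 0 := fun h => by simp [h] at ht
  have hs1 : s ≠ 1 := fun h => by simp [h] at ht
  have him : s.im ≤ ‖s - 1‖ := by simpa [abs_of_pos ht] using Complex.abs_im_le_norm (s - 1)
  have hmain : ‖(κ : ℂ) * (X : ℂ) ^ (1 - s) / (s - 1)‖ ≤ κ * X ^ (1 - s.re) / s.im := by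
    rw [norm_div, norm_mul, Complex.norm_real, Real.norm_of_nonneg hκ,
      Complex.norm_cpow_eq_rpow_re_of_pos hX0, Complex.sub_re, Complex.one_re]
    gcongr
  have hboundary : ‖(bR q κ X : ℂ) * (X : ℂ) ^ (-s)‖ ≤ A * X ^ (θ - s.re) := by
    rw [norm_mul, Complex.norm_real, Real.norm_eq_abs, Complex.norm_cpow_eq_rpow_re_of_pos hX0,
      Complex.neg_re, sub_eq_add_neg, Real.rpow_add hX0, ← mul_assoc]
    gcongr
    exact hAxiomA X hX
  have htail := norm_integral_Ioi_ofReal_mul_cpow_le (s := s) hAxiomA hX hs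
  rw [bZeta_sub_bZetaX_eq hq hfin hAxiomA hX hs hs0 hs1]
  refine (norm_add_le _ _).trans (add_le_add ((norm_sub_le _ _).trans
    (add_le_add hmain hboundary)) ?_)
  rw [norm_mul]
  gcongr

end Beurling

theorem statement_10_general
    (q : ℕ → ℝ) (hq : ∀ i, 1 < q i)
    (hfin : ∀ x : ℝ, {g : ℕ →₀ ℕ | bNorm q g ≤ x}.Finite)
    (κ A θ : ℝ) (hκ : 0 < κ) (hA : 0 < A) (hθ0 : 0 < θ)
    (hAxiomA : ∀ x : ℝ, 1 ≤ x → |bR q κ x| ≤ A * x ^ θ)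
    (X : ℝ) (hX : 2 ≤ X) (s : ℂ) (hs : θ < s.re) (hs1 : s.re < 1) (ht : 2 ≤ s.im) :
    ‖bZeta q κ s - bZetaX q X s‖ ≤
      1 / (s.re - θ) * (κ * X ^ (1 - s.re) / s.im + 2 * A * s.im / X ^ (s.re - θ)) ∧
    1 / (s.re - θ) * (κ * X ^ (1 - s.re) / s.im + 2 * A * s.im / X ^ (s.re - θ)) ≤
      (2 * A + κ) / (s.re - θ) * (X ^ (1 - s.re) / s.im + s.im / X ^ (s.re - θ)) := by
  have hX0 : 0 < X := by linarith
  have hd : 0 < s.re - θ := sub_pos.2 hs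
  have hnorm : ‖s‖ ≤ 1 + s.im := by
    have := Complex.norm_le_abs_re_add_abs_im s
    rw [abs_of_pos (hθ0.trans hs), abs_of_pos (by linarith)] at this
    linarith
  have hinv : X ^ (θ - s.re) = (X ^ (s.re - θ))⁻¹ := by rw [← Real.rpow_neg hX0.le, neg_sub]
  set u := X ^ (θ - s.re)
  refine ⟨(norm_bZeta_sub_bZetaX_le hq hfin hκ.le hAxiomA (by linarith) hs
    (by linarith)).trans ?_, ?_⟩
  · have hmain : κ * X ^ (1 - s.re) / s.im ≤ 1 / (s.re - θ) * (κ * X ^ (1 - s.re) / s.im) :=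
      le_mul_of_one_le_left (by positivity) (by rw [le_div_iff₀ hd]; linarith)
    have herror : A * u + ‖s‖ * (A * u / (s.re - θ)) ≤ 1 / (s.re - θ) * (2 * A * s.im * u) :=
      calc A * u + ‖s‖ * (A * u / (s.re - θ)) = (s.re - θ + ‖s‖) * (A * u / (s.re - θ)) := by
            field_simp
        _ ≤ 2 * s.im * (A * u / (s.re - θ)) := by gcongr; linarith
        _ = _ := by ring
    rw [div_eq_mul_inv _ (X ^ _), ← hinv]
    linarith
  · have hp : 0 ≤ X ^ (1 - s.re) / s.im := by positivity
    have hr : 0 ≤ s.im / X ^ (s.re - θ) := by positivity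
    calc _ ≤ 1 / (s.re - θ) *
          ((2 * A + κ) * (X ^ (1 - s.re) / s.im + s.im / X ^ (s.re - θ))) := by
          gcongr
          rw [mul_div_assoc κ, mul_div_assoc (2 * A)]
          nlinarith
      _ = _ := by ring

theorem statement_10
    (q : ℕ → ℝ) (hq : ∀ i, 1 < q i)
    (hfin : ∀ x : ℝ, {g : ℕ →₀ ℕ | bNorm q g ≤ x}.Finite)
    (κ A θ : ℝ) (hκ : 0 < κ) (hA : 0 < A) (hθ0 : 0 < θ) (hθ1 : θ < 1)
    (hAxiomA : ∀ x : ℝ, 1 ≤ x → |bR q κ x| ≤ A * x ^ θ)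
    (X : ℝ) (hX : 2 ≤ X) (s : ℂ) (hs : θ < s.re) (hs1 : s.re < 1) (ht : 2 ≤ s.im) :
    ‖bZeta q κ s - bZetaX q X s‖ ≤
      1 / (s.re - θ) * (κ * X ^ (1 - s.re) / s.im + 2 * A * s.im / X ^ (s.re - θ)) ∧
    1 / (s.re - θ) * (κ * X ^ (1 - s.re) / s.im + 2 * A * s.im / X ^ (s.re - θ)) ≤
      (2 * A + κ) / (s.re - θ) * (X ^ (1 - s.re) / s.im + s.im / X ^ (s.re - θ)) :=
  statement_10_general q hq hfin κ A θ hκ hA hθ0 hAxiomA X hX s hs hs1 ht
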